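/- Let ι be a finite nonempty index set and 𝒳 a type of records, and model datasets as functions D : ι → 𝒳. Let Φ be a finite nonempty output type, let q : (ι → 𝒳) → Φ → ℝ be a score function, let ε > 0 and Δq > 0, and assume |q(D, φ) − q(D′, φ)| ≤ Δq for all neighbouring datasets D, D′ and every φ ∈ Φ. For each dataset D, define the exponential mechanism as the probability mass function p_D on Φ given by p_D(φ) = exp(ε·q(D, φ)/(2·Δq)) / ∑_{ψ ∈ Φ} exp(ε·q(D, ψ)/(2·Δq)). Then the exponential mechanism satisfies ε-differential privacy: for all neighbouring datasets D, D′ and every φ ∈ Φ, p_D(φ) ≤ exp(ε)·p_{D′}(φ). -/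

import Mathlib

/-- Two datasets are neighbouring if they differ at exactly one index. -/
def Neighbouring {ι 𝒳 : Type*} (D D' : ι → 𝒳) : Prop :=
  ∃ i, D i ≠ D' i ∧ ∀ j, j ≠ i → D j = D' j

/-- The exponential mechanism: the probability of outputting `φ` on dataset `D` is
proportional to `exp (ε · q D φ / (2 · Δq))`. -/
noncomputable def expMechanism {ι 𝒳 Φ : Type*} [Fintype Φ]
    (q : (ι → 𝒳) → Φ → ℝ) (ε Δq : ℝ) (D : ι → 𝒳) (φ : Φ) : ℝ :=
  Real.exp (ε * q D φ / (2 * Δq)) / ∑ ψ : Φ, Real.exp (ε * q D ψ / (2 * Δq))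

/-!
Perturbing every logit by at most `c` moves each numerator `exp (f φ)` and the normaliser
`∑ ψ, exp (f ψ)` of a softmax by a factor of at most `exp c`, so each softmax probability
changes by a factor of at most `exp (2 c)`. With logits `ε q(D, ·) / (2 Δq)`, sensitivity
`Δq` gives `c = ε / 2`.
-/

open Real Finset

theorem exp_div_sum_exp_le_of_abs_sub_le {Φ : Type*} [Fintype Φ] (f g : Φ → ℝ) (c : ℝ)
    (h : ∀ ψ, |f ψ - g ψ| ≤ c) (φ : Φ) :
    exp (f φ) / ∑ ψ, exp (f ψ) ≤ exp (2 * c) * (exp (g φ) / ∑ ψ, exp (g ψ)) := by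
  have hsum_pos : ∀ w : Φ → ℝ, 0 < ∑ ψ, exp (w ψ) := fun w =>
    sum_pos (fun ψ _ => exp_pos _) ⟨φ, mem_univ φ⟩
  have hnum : exp (f φ) ≤ exp c * exp (g φ) := by
    rw [← exp_add, exp_le_exp]
    linarith [(abs_le.mp (h φ)).2]
  have hden : exp (-c) * ∑ ψ, exp (g ψ) ≤ ∑ ψ, exp (f ψ) := by
    rw [mul_sum]
    refine sum_le_sum fun ψ _ => ?_
    rw [← exp_add, exp_le_exp]
    linarith [(abs_le.mp (h ψ)).1]
  calc exp (f φ) / ∑ ψ, exp (f ψ)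
      ≤ exp c * exp (g φ) / (exp (-c) * ∑ ψ, exp (g ψ)) :=
        div_le_div₀ (by positivity) hnum (mul_pos (exp_pos _) (hsum_pos g)) hden
    _ = exp (2 * c) * (exp (g φ) / ∑ ψ, exp (g ψ)) := by
        rw [exp_neg, two_mul, exp_add]
        field_simp

theorem abs_mul_div_sub_mul_div_le_half {ε Δ a b : ℝ} (hε : 0 ≤ ε) (h : |a - b| ≤ Δ) :
    |ε * a / (2 * Δ) - ε * b / (2 * Δ)| ≤ ε / 2 := by
  have hΔ : 0 ≤ Δ := (abs_nonneg _).trans h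
  -- for `Δ = 0` the left side is `0` by the convention `x / 0 = 0`
  have hratio : |a - b| / Δ ≤ 1 := div_le_one_of_le₀ h hΔ
  calc |ε * a / (2 * Δ) - ε * b / (2 * Δ)| = ε / 2 * (|a - b| / Δ) := by
        rw [show ε * a / (2 * Δ) - ε * b / (2 * Δ) = ε / 2 * ((a - b) / Δ) by ring,
          abs_mul, abs_of_nonneg (by positivity : 0 ≤ ε / 2), abs_div, abs_of_nonneg hΔ]
    _ ≤ ε / 2 := mul_le_of_le_one_right (by positivity) hratio

theorem expMechanism_dp_general {ι 𝒳 Φ : Type*}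
    [Fintype Φ]
    (q : (ι → 𝒳) → Φ → ℝ) (ε Δq : ℝ) (hε : 0 < ε)
    (hsens : ∀ D D' : ι → 𝒳, Neighbouring D D' → ∀ φ : Φ,
      |q D φ - q D' φ| ≤ Δq) :
    ∀ D D' : ι → 𝒳, Neighbouring D D' → ∀ φ : Φ,
      expMechanism q ε Δq D φ ≤ Real.exp ε * expMechanism q ε Δq D' φ := by
  intro D D' hN φ
  have h := exp_div_sum_exp_le_of_abs_sub_le (fun ψ => ε * q D ψ / (2 * Δq))
    (fun ψ => ε * q D' ψ / (2 * Δq)) (ε / 2)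
    (fun ψ => abs_mul_div_sub_mul_div_le_half hε.le (hsens D D' hN ψ)) φ
  rwa [mul_div_cancel₀ ε two_ne_zero] at h

/-- The exponential mechanism satisfies `ε`-differential privacy: if the score function
`q` has sensitivity at most `Δq` over neighbouring datasets, then for all neighbouring
`D, D'` and every output `φ`, `p_D(φ) ≤ exp ε · p_{D'}(φ)`. -/
theorem expMechanism_dp {ι 𝒳 Φ : Type*} [Fintype ι] [Nonempty ι]
    [Fintype Φ] [Nonempty Φ]
    (q : (ι → 𝒳) → Φ → ℝ) (ε Δq : ℝ) (hε : 0 < ε) (hΔq : 0 < Δq)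
    (hsens : ∀ D D' : ι → 𝒳, Neighbouring D D' → ∀ φ : Φ,
      |q D φ - q D' φ| ≤ Δq) :
    ∀ D D' : ι → 𝒳, Neighbouring D D' → ∀ φ : Φ,
      expMechanism q ε Δq D φ ≤ Real.exp ε * expMechanism q ε Δq D' φ :=
  expMechanism_dp_general q ε Δq hε hsens
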